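/- Let G be a finite group, H ≤ G, and ρ a representation of G whose restriction to H is block-diagonal with irreducible blocks μ₁,…,μ_k of H. If f : G → ℂ is left H-invariant (f(hu) = f(u)), then for every block index i with μ_i nontrivial, the corresponding block of rows of f̂(ρ) = ∑_{u∈G} f(u)ρ(u) is zero. -/

import Mathlib

/-! Left `H`-invariance of `f` gives `ρ h * f̂(ρ) = f̂(ρ)` for `h ∈ H`. Since `ρ h` is block
diagonal, every column of the `j`-th block of rows of `f̂(ρ)` is a vector fixed by the block
`μ_j`. The fixed vectors of `μ_j` form an `H`-invariant subspace, so by irreducibility they are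
`0` or everything; the latter would make `μ_j` trivial. -/

open Matrix

theorem mul_sum_smul_eq_self_of_left_invariant {G R A : Type*} [Fintype G] [Mul G]
    [IsLeftCancelMul G] [Semiring R] [Semiring A] [Module R A] [SMulCommClass R A A]
    (ρ : G → A) (f : G → R) (h : G) (hmul : ∀ u, ρ (h * u) = ρ h * ρ u)
    (hf : ∀ u, f (h * u) = f u) :
    ρ h * ∑ u, f u • ρ u = ∑ u, f u • ρ u :=
  calc ρ h * ∑ u, f u • ρ u = ∑ u, f (h * u) • ρ (h * u) := by
        rw [Finset.mul_sum]
        exact Finset.sum_congr rfl fun u _ => by rw [mul_smul_comm, hmul, hf]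
    _ = ∑ u, f u • ρ u :=
        Fintype.sum_bijective (h * ·) (mul_right_injective h).bijective_of_finite _ _ fun _ => rfl

theorem Matrix.mul_apply_of_offDiagBlock_eq_zero {ι R o : Type*} [DecidableEq ι] [Fintype ι]
    {n : ι → Type*} [∀ i, Fintype (n i)] [NonUnitalNonAssocSemiring R]
    {A : Matrix (Σ i, n i) (Σ i, n i) R} (hA : ∀ p q : Σ i, n i, p.1 ≠ q.1 → A p q = 0)
    (M : Matrix (Σ i, n i) o R) (i : ι) (a : n i) (p : o) :
    (A * M) ⟨i, a⟩ p = ∑ c, A ⟨i, a⟩ ⟨i, c⟩ * M ⟨i, c⟩ p := by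
  rw [mul_apply, Fintype.sum_sigma, Finset.sum_eq_single_of_mem i (Finset.mem_univ i)]
  intro i' _ hi'
  exact Finset.sum_eq_zero fun c _ => by rw [hA _ _ hi'.symm, zero_mul]

namespace Matrix

variable {n R : Type*} [Fintype n] [CommSemiring R]

def fixedSubmodule (S : Set (Matrix n n R)) : Submodule R (n → R) where
  carrier := {w | ∀ B ∈ S, B *ᵥ w = w}
  add_mem' hv hw B hB := by rw [mulVec_add, hv B hB, hw B hB]
  zero_mem' B _ := mulVec_zero B
  smul_mem' c w hw B hB := by rw [mulVec_smul, hw B hB]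

variable {S : Set (Matrix n n R)}

theorem mulVec_mem_fixedSubmodule {B : Matrix n n R} (hB : B ∈ S) {w : n → R}
    (hw : w ∈ fixedSubmodule S) : B *ᵥ w ∈ fixedSubmodule S := by
  rwa [hw B hB]

theorem eq_one_of_fixedSubmodule_eq_top [DecidableEq n] (htop : fixedSubmodule S = ⊤)
    {B : Matrix n n R} (hB : B ∈ S) : B = 1 := by
  ext a b
  have hcol : B *ᵥ Pi.single b 1 = Pi.single b 1 :=
    (htop ▸ Submodule.mem_top : Pi.single b (1 : R) ∈ fixedSubmodule S) B hB
  rw [mulVec_single_one] at hcol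
  simpa [Pi.single_apply, one_apply] using congrFun hcol a

theorem eq_zero_of_mem_fixedSubmodule [DecidableEq n]
    (hirr : ∀ W : Submodule R (n → R), (∀ B ∈ S, ∀ w ∈ W, B *ᵥ w ∈ W) →
      W = ⊥ ∨ W = ⊤)
    (hS : ∃ B ∈ S, B ≠ 1) {w : n → R} (hw : w ∈ fixedSubmodule S) : w = 0 := by
  obtain ⟨B, hB, hB1⟩ := hS
  rcases hirr _ fun _ hB' _ => mulVec_mem_fixedSubmodule hB' with hbot | htop
  · rwa [hbot, Submodule.mem_bot] at hw
  · exact absurd (eq_one_of_fixedSubmodule_eq_top htop hB) hB1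

end Matrix

theorem fourier_left_invariant_rows_zero_general
    {G : Type*} [Group G] [Fintype G] (H : Subgroup G)
    {k : ℕ} {m : Fin k → ℕ}
    (ρ : G → Matrix ((j : Fin k) × Fin (m j)) ((j : Fin k) × Fin (m j)) ℂ)
    (hmul : ∀ u v : G, ρ (u * v) = ρ u * ρ v)
    -- the restriction of `ρ` to `H` is block diagonal
    (hblock : ∀ h ∈ H, ∀ p q : (j : Fin k) × Fin (m j),
      p.1 ≠ q.1 → ρ h p q = 0)
    -- each block `μ_j` is an irreducible representation of `H`
    (hirr : ∀ j : Fin k, ∀ W : Submodule ℂ (Fin (m j) → ℂ),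
      (∀ h ∈ H, ∀ w ∈ W, (fun a => ∑ b, ρ h ⟨j, a⟩ ⟨j, b⟩ * w b) ∈ W) →
      W = ⊥ ∨ W = ⊤)
    (f : G → ℂ)
    (hf : ∀ u : G, ∀ h ∈ H, f (h * u) = f u)
    -- a block `j` on which `μ_j` is not the trivial representation of `H`
    (j : Fin k)
    (hjnontriv : ∃ h ∈ H, ∃ a b : Fin (m j),
      ρ h ⟨j, a⟩ ⟨j, b⟩ ≠ (if a = b then 1 else 0)) :
    ∀ (p : (j : Fin k) × Fin (m j)) (b : Fin (m j)),
      (∑ u : G, f u • ρ u) ⟨j, b⟩ p = 0 := by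
  intro p b
  set M := ∑ u : G, f u • ρ u
  let μ : G → Matrix (Fin (m j)) (Fin (m j)) ℂ := fun h =>
    (ρ h).submatrix (fun a => ⟨j, a⟩) (fun b => ⟨j, b⟩)
  have hμirr : ∀ W : Submodule ℂ (Fin (m j) → ℂ),
      (∀ B ∈ μ '' H, ∀ w ∈ W, B *ᵥ w ∈ W) → W = ⊥ ∨ W = ⊤ :=
    fun W hW => hirr j W fun h hh => hW _ ⟨h, hh, rfl⟩
  have hμnontriv : ∃ B ∈ μ '' H, B ≠ 1 := by
    obtain ⟨h, hh, a, b, hab⟩ := hjnontriv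
    refine ⟨μ h, ⟨h, hh, rfl⟩, fun hμ1 => hab ?_⟩
    simpa [μ, one_apply] using congrFun₂ hμ1 a b
  have hfixed : (fun a => M ⟨j, a⟩ p) ∈ fixedSubmodule (μ '' H) := by
    rintro _ ⟨h, hh, rfl⟩
    ext a
    have hM : ρ h * M = M :=
      mul_sum_smul_eq_self_of_left_invariant ρ f h (hmul h) fun u => hf u h hh
    calc ∑ c, ρ h ⟨j, a⟩ ⟨j, c⟩ * M ⟨j, c⟩ p
        = (ρ h * M) ⟨j, a⟩ p := (mul_apply_of_offDiagBlock_eq_zero (hblock h hh) ..).symm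
      _ = M ⟨j, a⟩ p := by rw [hM]
  exact congrFun (eq_zero_of_mem_fixedSubmodule hμirr hμnontriv hfixed) b

/-- If `f : G → ℂ` is left `H`-invariant and the restriction of `ρ` to `H` is
block diagonal with irreducible blocks, then for every nontrivial block `j` the
corresponding rows of the Fourier matrix `∑ u, f u • ρ u` vanish. -/
theorem fourier_left_invariant_rows_zero
    {G : Type*} [Group G] [Fintype G] (H : Subgroup G)
    {k : ℕ} {m : Fin k → ℕ}
    (ρ : G → Matrix ((j : Fin k) × Fin (m j)) ((j : Fin k) × Fin (m j)) ℂ)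
    (hmul : ∀ u v : G, ρ (u * v) = ρ u * ρ v)
    (hone : ρ 1 = 1)
    -- the restriction of `ρ` to `H` is block diagonal
    (hblock : ∀ h ∈ H, ∀ p q : (j : Fin k) × Fin (m j),
      p.1 ≠ q.1 → ρ h p q = 0)
    -- each block `μ_j` is an irreducible representation of `H`
    (hirr : ∀ j : Fin k, ∀ W : Submodule ℂ (Fin (m j) → ℂ),
      (∀ h ∈ H, ∀ w ∈ W, (fun a => ∑ b, ρ h ⟨j, a⟩ ⟨j, b⟩ * w b) ∈ W) →
      W = ⊥ ∨ W = ⊤)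
    (f : G → ℂ)
    (hf : ∀ u : G, ∀ h ∈ H, f (h * u) = f u)
    -- a block `j` on which `μ_j` is not the trivial representation of `H`
    (j : Fin k)
    (hjnontriv : ∃ h ∈ H, ∃ a b : Fin (m j),
      ρ h ⟨j, a⟩ ⟨j, b⟩ ≠ (if a = b then 1 else 0)) :
    ∀ (p : (j : Fin k) × Fin (m j)) (b : Fin (m j)),
      (∑ u : G, f u • ρ u) ⟨j, b⟩ p = 0 :=
  fourier_left_invariant_rows_zero_general H ρ hmul hblock hirr f hf j hjnontriv
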